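/- Let c, d be positive integers, τ > 0, D ∈ M_c(ℂ) with Dᴴ D = I (D unitary), and Y ∈ M_{c×d}(ℂ). Define α̂ ∈ M_{c×d}(ℂ) by applying entrywise hard thresholding at level √(2τ) to Dᴴ Y, i.e. α̂(s,t) = (DᴴY)(s,t) if |(DᴴY)(s,t)| > √(2τ) and 0 otherwise. Then for every α ∈ M_{c×d}(ℂ): (1/2)·‖D·α̂ − Y‖_F² + τ·‖α̂‖₀ ≤ (1/2)·‖D·α − Y‖_F² + τ·‖α‖₀. -/

import Mathlib

open Matrix

/-- The isotropic `L⁰` pseudo-norm of a complex matrix: the number of its nonzero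
entries, as a real number. -/
noncomputable def isoL0 {c d : ℕ} (α : Matrix (Fin c) (Fin d) ℂ) : ℝ :=
  (Nat.card {p : Fin c × Fin d // α p.1 p.2 ≠ 0} : ℝ)

/-!
Because `D` is unitary, `‖Dα − Y‖_F = ‖α − DᴴY‖_F`, so the objective splits into a sum over the
entries of the scalar problem `a ↦ ½‖a − b‖² + τ·[a ≠ 0]` with `b = (DᴴY)(s,t)`. Its minimum is
`min (‖b‖²/2) τ`, attained at `0` or at `b`, and hard thresholding at `√(2τ)` picks the better one.
-/

section HardThreshold

variable {E : Type*} [NormedAddCommGroup E]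

noncomputable def hardThreshold (t : ℝ) (b : E) : E :=
  if t < ‖b‖ then b else 0

open Classical in
noncomputable def l0PenalizedCost (τ : ℝ) (b a : E) : ℝ :=
  1 / 2 * ‖a - b‖ ^ 2 + τ * if a ≠ 0 then 1 else 0

lemma min_le_l0PenalizedCost {τ : ℝ} (b a : E) :
    min (‖b‖ ^ 2 / 2) τ ≤ l0PenalizedCost τ b a := by
  by_cases ha : a = 0
  · simp [l0PenalizedCost, ha, div_eq_inv_mul]
  · have := sq_nonneg ‖a - b‖
    rw [l0PenalizedCost, if_pos ha, mul_one]
    exact (min_le_right _ _).trans (by linarith)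

lemma l0PenalizedCost_hardThreshold {τ : ℝ} (hτ : 0 ≤ τ) (b : E) :
    l0PenalizedCost τ b (hardThreshold √(2 * τ) b) = min (‖b‖ ^ 2 / 2) τ := by
  have h_iff : √(2 * τ) < ‖b‖ ↔ 2 * τ < ‖b‖ ^ 2 := Real.sqrt_lt (by positivity) (norm_nonneg b)
  by_cases hb : √(2 * τ) < ‖b‖
  · have hb0 : b ≠ 0 := norm_pos_iff.mp ((Real.sqrt_nonneg _).trans_lt hb)
    rw [min_eq_right (by linarith [h_iff.mp hb]), hardThreshold, if_pos hb]
    simp [l0PenalizedCost, hb0]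
  · rw [min_eq_left (by linarith [h_iff.not.mp hb]), hardThreshold, if_neg hb]
    simp [l0PenalizedCost, div_eq_inv_mul]

theorem l0PenalizedCost_hardThreshold_le {τ : ℝ} (hτ : 0 ≤ τ) (b a : E) :
    l0PenalizedCost τ b (hardThreshold √(2 * τ) b) ≤ l0PenalizedCost τ b a :=
  (l0PenalizedCost_hardThreshold hτ b).trans_le (min_le_l0PenalizedCost b a)

end HardThreshold

section Frobenius

variable {𝕜 m n : Type*} [RCLike 𝕜] [Fintype m] [Fintype n]

lemma ofReal_sum_norm_sq_eq_trace (M : Matrix m n 𝕜) :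
    ((∑ s, ∑ t, ‖M s t‖ ^ 2 : ℝ) : 𝕜) = (Mᴴ * M).trace := by
  simp only [trace, diag, mul_apply, conjTranspose_apply, RCLike.star_def, RCLike.conj_mul]
  push_cast
  exact Finset.sum_comm

lemma sum_norm_sq_mul_of_conjTranspose_mul_self [DecidableEq m] {D : Matrix m m 𝕜}
    (hD : Dᴴ * D = 1) (M : Matrix m n 𝕜) :
    ∑ s, ∑ t, ‖(D * M) s t‖ ^ 2 = ∑ s, ∑ t, ‖M s t‖ ^ 2 := by
  apply RCLike.ofReal_injective (K := 𝕜)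
  rw [ofReal_sum_norm_sq_eq_trace, ofReal_sum_norm_sq_eq_trace, conjTranspose_mul,
    Matrix.mul_assoc, ← Matrix.mul_assoc Dᴴ, hD, Matrix.one_mul]

lemma sum_norm_sq_mul_sub_of_conjTranspose_mul_self [DecidableEq m] {D : Matrix m m 𝕜}
    (hD : Dᴴ * D = 1) (M Y : Matrix m n 𝕜) :
    ∑ s, ∑ t, ‖(D * M) s t - Y s t‖ ^ 2 = ∑ s, ∑ t, ‖M s t - (Dᴴ * Y) s t‖ ^ 2 := by
  have hY : D * M - Y = D * (M - Dᴴ * Y) := by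
    rw [Matrix.mul_sub, ← Matrix.mul_assoc, mul_eq_one_comm.mp hD, Matrix.one_mul]
  simpa only [Matrix.sub_apply, ← hY] using
    sum_norm_sq_mul_of_conjTranspose_mul_self hD (M - Dᴴ * Y)

end Frobenius

lemma isoL0_eq_sum {c d : ℕ} (α : Matrix (Fin c) (Fin d) ℂ) :
    isoL0 α = ∑ s, ∑ t, if α s t ≠ 0 then (1 : ℝ) else 0 := by
  classical
  rw [isoL0, Nat.card_eq_fintype_card, Fintype.card_subtype, Finset.card_filter,
    Nat.cast_sum, Fintype.sum_prod_type]
  push_cast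
  rfl

lemma sparse_coding_objective_eq_sum {c d : ℕ} (τ : ℝ) (D : Matrix (Fin c) (Fin c) ℂ)
    (hD : Dᴴ * D = 1) (Y α : Matrix (Fin c) (Fin d) ℂ) :
    (1 / 2) * (∑ s, ∑ t, ‖(D * α) s t - Y s t‖ ^ 2) + τ * isoL0 α =
      ∑ s, ∑ t, l0PenalizedCost τ ((Dᴴ * Y) s t) (α s t) := by
  simp only [sum_norm_sq_mul_sub_of_conjTranspose_mul_self hD, isoL0_eq_sum, Finset.mul_sum,
    ← Finset.sum_add_distrib, l0PenalizedCost]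

open Classical in
theorem sparse_coding_closed_form_general {c d : ℕ}
    (τ : ℝ) (hτ : 0 < τ)
    (D : Matrix (Fin c) (Fin c) ℂ) (hD : Dᴴ * D = 1)
    (Y : Matrix (Fin c) (Fin d) ℂ) (αhat : Matrix (Fin c) (Fin d) ℂ)
    (hαhat : ∀ s t, αhat s t =
      if Real.sqrt (2 * τ) < ‖(Dᴴ * Y) s t‖ then (Dᴴ * Y) s t else 0) :
    ∀ α : Matrix (Fin c) (Fin d) ℂ,
      (1 / 2) * (∑ s : Fin c, ∑ t : Fin d, ‖(D * αhat) s t - Y s t‖ ^ 2)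
          + τ * isoL0 αhat ≤
      (1 / 2) * (∑ s : Fin c, ∑ t : Fin d, ‖(D * α) s t - Y s t‖ ^ 2)
          + τ * isoL0 α := by
  intro α
  rw [sparse_coding_objective_eq_sum τ D hD, sparse_coding_objective_eq_sum τ D hD]
  gcongr with s _ t _
  rw [hαhat s t]
  exact l0PenalizedCost_hardThreshold_le hτ.le _ _

open Classical in
/-- Closed-form solution of the sparse-coding subproblem with a unitary dictionary:
entrywise hard thresholding of `Dᴴ Y` at level `√(2τ)` globally minimizes
`α ↦ (1/2)‖Dα − Y‖_F² + τ‖α‖₀`. -/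
theorem sparse_coding_closed_form {c d : ℕ} (hc : 0 < c) (hd : 0 < d)
    (τ : ℝ) (hτ : 0 < τ)
    (D : Matrix (Fin c) (Fin c) ℂ) (hD : Dᴴ * D = 1)
    (Y : Matrix (Fin c) (Fin d) ℂ) (αhat : Matrix (Fin c) (Fin d) ℂ)
    (hαhat : ∀ s t, αhat s t =
      if Real.sqrt (2 * τ) < ‖(Dᴴ * Y) s t‖ then (Dᴴ * Y) s t else 0) :
    ∀ α : Matrix (Fin c) (Fin d) ℂ,
      (1 / 2) * (∑ s : Fin c, ∑ t : Fin d, ‖(D * αhat) s t - Y s t‖ ^ 2)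
          + τ * isoL0 αhat ≤
      (1 / 2) * (∑ s : Fin c, ∑ t : Fin d, ‖(D * α) s t - Y s t‖ ^ 2)
          + τ * isoL0 α :=
  sparse_coding_closed_form_general τ hτ D hD Y αhat hαhat
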